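/- In the weak commutativity group χ(G), for all g, h, a, b ∈ G, writing [g,φ] := g⁻¹·g^φ, the element [[g,φ]·[h,φ], a, b^φ] · ([[g,φ],a,b^φ]·[[h,φ],a,b^φ])⁻¹ belongs to the subgroup L₁₂; that is, [[g,φ]·[h,φ], a, b^φ] ≡ [[g,φ],a,b^φ]·[[h,φ],a,b^φ] modulo L₁₂. -/

import Mathlib

open Subgroup
open scoped commutatorElement

/-- The weak commutativity relations inside the free product `G ∗ G`. -/
def chiRel (G : Type*) [Group G] : Subgroup (Monoid.Coprod G G) :=
  Subgroup.normalClosure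
    {x | ∃ g : G, x = Monoid.Coprod.inl g * Monoid.Coprod.inr g *
      (Monoid.Coprod.inl g)⁻¹ * (Monoid.Coprod.inr g)⁻¹}

instance chiRel_normal (G : Type*) [Group G] : (chiRel G).Normal :=
  Subgroup.normalClosure_normal

/-- The weak commutativity group `χ(G)`. -/
def Chi (G : Type*) [Group G] : Type _ := Monoid.Coprod G G ⧸ chiRel G

instance (G : Type*) [Group G] : Group (Chi G) :=
  inferInstanceAs (Group (Monoid.Coprod G G ⧸ chiRel G))

/-- The canonical map `G → χ(G)`, `g ↦ g`. -/
def chiIota1 (G : Type*) [Group G] : G →* Chi G :=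
  (QuotientGroup.mk' (chiRel G)).comp Monoid.Coprod.inl

/-- The canonical map `G → χ(G)`, `g ↦ g^φ`. -/
def chiIota2 (G : Type*) [Group G] : G →* Chi G :=
  (QuotientGroup.mk' (chiRel G)).comp Monoid.Coprod.inr

/-- `G₁ ≤ χ(G)`. -/
def chiG1 (G : Type*) [Group G] : Subgroup (Chi G) := (chiIota1 G).range

/-- `G₂ = G^φ ≤ χ(G)`. -/
def chiG2 (G : Type*) [Group G] : Subgroup (Chi G) := (chiIota2 G).range

/-- `L = ⟨g⁻¹ g^φ : g ∈ G⟩`. -/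
def chiL (G : Type*) [Group G] : Subgroup (Chi G) :=
  Subgroup.closure {x | ∃ g : G, x = (chiIota1 G g)⁻¹ * chiIota2 G g}

/-- `D = ⁅G₁, G₂⁆`. -/
def chiD (G : Type*) [Group G] : Subgroup (Chi G) := ⁅chiG1 G, chiG2 G⁆

/-- `L₁ = ⁅L, G₁⁆`. -/
def chiL1 (G : Type*) [Group G] : Subgroup (Chi G) := ⁅chiL G, chiG1 G⁆

/-- `L₂ = ⁅L, G₂⁆`. -/
def chiL2 (G : Type*) [Group G] : Subgroup (Chi G) := ⁅chiL G, chiG2 G⁆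

/-- `R = ⁅⁅G₁, L⁆, G₂⁆`. -/
def chiR (G : Type*) [Group G] : Subgroup (Chi G) := ⁅⁅chiG1 G, chiL G⁆, chiG2 G⁆

/-- `L₁₂ = ⁅L₁, L₂⁆`. -/
def chiL12 (G : Type*) [Group G] : Subgroup (Chi G) := ⁅chiL1 G, chiL2 G⁆

/-! Write `ℓ g = (ι₁ g)⁻¹ * ι₂ g` for the generators of `L`. Conjugating `ℓ k` by `ι₁ g` gives
`ℓ (k * g⁻¹) * (ℓ g⁻¹)⁻¹`, and `ι₂ g = ι₁ g * ℓ g`, so `L` is normal and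
`L ⊔ G₁ = L ⊔ G₂ = G₁ ⊔ G₂ = χ(G)`. A commutator subgroup `⁅A, B⁆` is normalized by `A ⊔ B`, hence
`D`, `L₁`, `L₂` and `L₁₂` are normal. Expanding the relation for `b * a` gives Sidki's identity
`⁅ι₂ a, ι₁ b⁆ = ⁅ι₁ a, ι₂ b⁆`; with it, conjugation by `ι₁ k` and by `ι₂ k` agree on `D`, i.e. `D`
centralizes `L`.

For `u, v ∈ L`, `x ∈ G₁`, `y ∈ G₂`, a group identity writes
`⁅⁅u * v, x⁆, y⁆ * (⁅⁅u, x⁆, y⁆ * ⁅⁅v, x⁆, y⁆)⁻¹` as a commutator of `L₁` with `L₂`, a conjugate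
of `⁅u, ⁅⁅v, x⁆, y⁆⁆`, and a conjugate of a further element of `⁅L₁, L₂⁆`. The middle factor
vanishes because `⁅⁅v, x⁆, y⁆ ∈ D`, which holds as `v ∈ G₁ * G₂` and `D` is normal. -/

section Commutators

variable {H : Type*} [Group H]

theorem Commute.conj_commutatorElement {p r : H} (h : Commute p r) (q : H) :
    p * ⁅q, r⁆ * p⁻¹ = ⁅p * q, r⁆ := by
  rw [commutatorElement_mul_left_eq_conj_mul, commutatorElement_eq_one_iff_commute.mpr h, mul_one]

theorem commute_inv_mul_of_conj_eq {p q x : H} (h : p * x * p⁻¹ = q * x * q⁻¹) :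
    Commute (p⁻¹ * q) x := by
  calc p⁻¹ * q * x = p⁻¹ * (q * x * q⁻¹) * q := by group
    _ = p⁻¹ * (p * x * p⁻¹) * q := by rw [h]
    _ = x * (p⁻¹ * q) := by group

theorem commutatorElement_eq_conj_of_commute_mul {p q s t : H} (hps : Commute p s)
    (hqt : Commute q t) (h : Commute (p * q) (s * t)) :
    ⁅q, s⁆ = (p⁻¹ * s) * ⁅t, p⁆ * (p⁻¹ * s)⁻¹ := by
  calc ⁅q, s⁆ = p⁻¹ * (p * q * (s * t)) * (q * t)⁻¹ * s⁻¹ := by group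
    _ = p⁻¹ * (s * t * (p * q)) * (t * q)⁻¹ * s⁻¹ := by rw [h.eq, hqt.eq]
    _ = p⁻¹ * s * t * p * t⁻¹ * (p * s)⁻¹ * p := by group
    _ = (p⁻¹ * s) * ⁅t, p⁆ * (p⁻¹ * s)⁻¹ := by rw [hps.eq]; group

namespace Subgroup

theorem normal_commutator_of_sup_eq_top {A B : Subgroup H} (h : A ⊔ B = ⊤) :
    ⁅A, B⁆.Normal :=
  normalizer_eq_top_iff.mp <| eq_top_iff.mpr <|
    h ▸ sup_le (normalizer_commutator_ge_left A B) (normalizer_commutator_ge_right A B)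

theorem commutatorElement_commutatorElement_mem_commutator {A B : Subgroup H}
    [hN : ⁅A, B⁆.Normal] {a a' b b' : H} (ha : a ∈ A) (ha' : a' ∈ A) (hb : b ∈ B) (hb' : b' ∈ B) :
    ⁅⁅a * b, a'⁆, b'⁆ ∈ ⁅A, B⁆ := by
  have hd : a * ⁅b, a'⁆ * a⁻¹ ∈ ⁅A, B⁆ :=
    hN.conj_mem _ (commutator_comm A B ▸ commutator_mem_commutator hb ha') a
  have haa' : ⁅a, a'⁆ ∈ A := by
    rw [commutatorElement_def]; exact mul_mem (mul_mem (mul_mem ha ha') (inv_mem ha)) (inv_mem ha')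
  rw [commutatorElement_mul_left_eq_conj_mul, commutatorElement_mul_left_eq_conj_mul]
  refine mul_mem (hN.conj_mem _ (commutator_mem_commutator haa' hb') _) ?_
  rw [commutatorElement_def, mul_assoc _ b', mul_assoc]
  exact mul_mem hd (hN.conj_mem _ (inv_mem hd) b')

theorem commutatorElement_commutatorElement_mul_mem_commutator {L A B : Subgroup H} [L.Normal]
    [hLA : ⁅L, A⁆.Normal] [⁅L, B⁆.Normal] {u v x y : H} (hu : u ∈ L) (hv : v ∈ L) (hx : x ∈ A)
    (hy : y ∈ B) (hcomm : Commute u ⁅⁅v, x⁆, y⁆) :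
    ⁅⁅u * v, x⁆, y⁆ * (⁅⁅u, x⁆, y⁆ * ⁅⁅v, x⁆, y⁆)⁻¹ ∈ ⁅⁅L, A⁆, ⁅L, B⁆⁆ := by
  set w := ⁅⁅u, x⁆, y⁆
  set w' := ⁅⁅v, x⁆, y⁆
  have hvx : ⁅v, x⁆ ∈ ⁅L, A⁆ := commutator_mem_commutator hv hx
  have hw : w ∈ ⁅L, B⁆ :=
    commutator_mem_commutator (commutator_le_left L A (commutator_mem_commutator hu hx)) hy
  have hyu : ⁅y⁻¹, u⁻¹⁆ ∈ ⁅L, B⁆ := by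
    rw [← commutatorElement_inv]
    exact inv_mem (commutator_mem_commutator (inv_mem hu) (inv_mem hy))
  have key : ⁅⁅u * v, x⁆, y⁆ * (w * w')⁻¹ =
      ⁅u * ⁅v, x⁆ * u⁻¹, w⁆ * (w * ⁅u, w'⁆ * w⁻¹) *
        ((w * w' * u * y) * ⁅⁅v, x⁆, ⁅y⁻¹, u⁻¹⁆⁆ * (w * w' * u * y)⁻¹) := by
    simp only [w, w', commutatorElement_def]; group
  rw [key, commutatorElement_eq_one_iff_commute.mpr hcomm, mul_one, mul_inv_cancel, mul_one]
  exact mul_mem (commutator_mem_commutator (hLA.conj_mem _ hvx u) hw)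
    ((commutator_normal _ _).conj_mem _ (commutator_mem_commutator hvx hyu) _)

end Subgroup

end Commutators

section Chi

variable (G : Type*) [Group G]

theorem chiIota1_commute_chiIota2 (g : G) : Commute (chiIota1 G g) (chiIota2 G g) :=
  commutatorElement_eq_one_iff_commute.mp <|
    (map_commutatorElement (QuotientGroup.mk' (chiRel G)) _ _).symm.trans <|
      (QuotientGroup.eq_one_iff _).mpr (subset_normalClosure ⟨g, rfl⟩)

theorem chiG1_sup_chiG2 : chiG1 G ⊔ chiG2 G = ⊤ := by
  have h1 : chiG1 G = (Monoid.Coprod.inl : G →* _).range.map (QuotientGroup.mk' (chiRel G)) :=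
    MonoidHom.range_comp _ _
  have h2 : chiG2 G = (Monoid.Coprod.inr : G →* _).range.map (QuotientGroup.mk' (chiRel G)) :=
    MonoidHom.range_comp _ _
  have h : (Monoid.Coprod.inl : G →* _).range.map (QuotientGroup.mk' (chiRel G)) ⊔
      (Monoid.Coprod.inr : G →* _).range.map (QuotientGroup.mk' (chiRel G)) = ⊤ := by
    rw [← Subgroup.map_sup, Monoid.Coprod.range_inl_sup_range_inr, ← MonoidHom.range_eq_map]
    exact QuotientGroup.range_mk' _
  rw [h1, h2]
  exact h

theorem inv_chiIota1_mul_chiIota2_mem_chiL (g : G) : (chiIota1 G g)⁻¹ * chiIota2 G g ∈ chiL G :=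
  subset_closure ⟨g, rfl⟩

theorem chiL_sup_chiG1 : chiL G ⊔ chiG1 G = ⊤ := by
  refine eq_top_iff.mpr (chiG1_sup_chiG2 G ▸ sup_le le_sup_right ?_)
  rintro _ ⟨g, rfl⟩
  rw [show chiIota2 G g = chiIota1 G g * ((chiIota1 G g)⁻¹ * chiIota2 G g) by group]
  exact mul_mem (mem_sup_right ⟨g, rfl⟩) (mem_sup_left (inv_chiIota1_mul_chiIota2_mem_chiL G g))

theorem chiL_sup_chiG2 : chiL G ⊔ chiG2 G = ⊤ := by
  refine eq_top_iff.mpr (chiG1_sup_chiG2 G ▸ sup_le ?_ le_sup_right)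
  rintro _ ⟨g, rfl⟩
  rw [show chiIota1 G g = chiIota2 G g * ((chiIota1 G g)⁻¹ * chiIota2 G g)⁻¹ by group]
  exact mul_mem (mem_sup_right ⟨g, rfl⟩)
    (inv_mem (mem_sup_left (inv_chiIota1_mul_chiIota2_mem_chiL G g)))

theorem chiL_normal : (chiL G).Normal := by
  refine normalizer_eq_top_iff.mp (eq_top_iff.mpr (chiL_sup_chiG1 G ▸ sup_le le_normalizer ?_))
  refine le_normalizer_closure_iff.mpr ?_
  rintro _ ⟨g, rfl⟩ _ ⟨k, rfl⟩
  have h : chiIota1 G g * ((chiIota1 G k)⁻¹ * chiIota2 G k) * (chiIota1 G g)⁻¹ =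
      ((chiIota1 G (k * g⁻¹))⁻¹ * chiIota2 G (k * g⁻¹)) *
        ((chiIota1 G g⁻¹)⁻¹ * chiIota2 G g⁻¹)⁻¹ := by
    simp only [map_mul, map_inv]; group
  rw [h]
  exact mul_mem (subset_closure ⟨_, rfl⟩) (inv_mem (subset_closure ⟨_, rfl⟩))

theorem chiIota1_commutator_chiIota2_eq_conj (a b : G) :
    ⁅chiIota1 G a, chiIota2 G b⁆ = ((chiIota1 G b)⁻¹ * chiIota2 G b) *
      ⁅chiIota2 G a, chiIota1 G b⁆ * ((chiIota1 G b)⁻¹ * chiIota2 G b)⁻¹ :=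
  commutatorElement_eq_conj_of_commute_mul (chiIota1_commute_chiIota2 G b)
    (chiIota1_commute_chiIota2 G a) (by simpa using chiIota1_commute_chiIota2 G (b * a))

theorem chiIota2_commutator_chiIota1 (a b : G) :
    ⁅chiIota2 G a, chiIota1 G b⁆ = ⁅chiIota1 G a, chiIota2 G b⁆ := by
  set ℓ := (chiIota1 G b)⁻¹ * chiIota2 G b
  have hb := chiIota1_commute_chiIota2 G b
  have hℓ : Commute ℓ (chiIota2 G b) := hb.inv_left.mul_left (Commute.refl _)
  have hconj : chiIota1 G b * ⁅chiIota1 G a, chiIota2 G b⁆ * (chiIota1 G b)⁻¹ =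
      chiIota2 G b * ⁅chiIota1 G a, chiIota2 G b⁆ * (chiIota2 G b)⁻¹ := by
    calc _ = ⁅chiIota1 G (b * a), chiIota2 G b⁆ := by rw [hb.conj_commutatorElement, map_mul]
      _ = ℓ * ⁅chiIota2 G (b * a), chiIota1 G b⁆ * ℓ⁻¹ :=
          chiIota1_commutator_chiIota2_eq_conj G (b * a) b
      _ = ℓ * (chiIota2 G b * ⁅chiIota2 G a, chiIota1 G b⁆ * (chiIota2 G b)⁻¹) * ℓ⁻¹ := by
          rw [hb.symm.conj_commutatorElement, map_mul]
      _ = (ℓ * chiIota2 G b) * ⁅chiIota2 G a, chiIota1 G b⁆ * (ℓ * chiIota2 G b)⁻¹ := by group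
      _ = chiIota2 G b * (ℓ * ⁅chiIota2 G a, chiIota1 G b⁆ * ℓ⁻¹) * (chiIota2 G b)⁻¹ := by
          rw [hℓ.eq]; group
      _ = _ := by rw [← chiIota1_commutator_chiIota2_eq_conj]
  have h := chiIota1_commutator_chiIota2_eq_conj G a b
  conv_lhs at h => rw [← (commute_inv_mul_of_conj_eq hconj).mul_inv_cancel]
  exact (mul_left_cancel (mul_right_cancel h)).symm

theorem commute_inv_chiIota1_mul_chiIota2_commutator (k a b : G) :
    Commute ((chiIota1 G k)⁻¹ * chiIota2 G k) ⁅chiIota1 G a, chiIota2 G b⁆ := by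
  refine commute_inv_mul_of_conj_eq ?_
  calc _ = ⁅chiIota1 G (k * a), chiIota2 G b⁆ * ⁅chiIota1 G k, chiIota2 G b⁆⁻¹ := by
        rw [map_mul, commutatorElement_mul_left_eq_conj_mul]; group
    _ = ⁅chiIota2 G (k * a), chiIota1 G b⁆ * ⁅chiIota2 G k, chiIota1 G b⁆⁻¹ := by
        rw [chiIota2_commutator_chiIota1, chiIota2_commutator_chiIota1]
    _ = _ := by
        rw [← chiIota2_commutator_chiIota1, map_mul, commutatorElement_mul_left_eq_conj_mul]; group

theorem chiD_le_centralizer_chiL : chiD G ≤ centralizer (chiL G) := by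
  rw [chiL, centralizer_closure]
  refine commutator_le.mpr ?_
  rintro _ ⟨a, rfl⟩ _ ⟨b, rfl⟩ _ ⟨k, rfl⟩
  exact (commute_inv_chiIota1_mul_chiIota2_commutator G k a b).eq

theorem chiD_normal : (chiD G).Normal := normal_commutator_of_sup_eq_top (chiG1_sup_chiG2 G)

theorem chiL1_normal : (chiL1 G).Normal := normal_commutator_of_sup_eq_top (chiL_sup_chiG1 G)

theorem chiL2_normal : (chiL2 G).Normal := normal_commutator_of_sup_eq_top (chiL_sup_chiG2 G)

end Chi

theorem commutator_additive_mod_L12 (G : Type*) [Group G] (g h a b : G) :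
    ⁅⁅((chiIota1 G g)⁻¹ * chiIota2 G g) * ((chiIota1 G h)⁻¹ * chiIota2 G h),
        chiIota1 G a⁆, chiIota2 G b⁆ *
      (⁅⁅(chiIota1 G g)⁻¹ * chiIota2 G g, chiIota1 G a⁆, chiIota2 G b⁆ *
        ⁅⁅(chiIota1 G h)⁻¹ * chiIota2 G h, chiIota1 G a⁆, chiIota2 G b⁆)⁻¹ ∈
      chiL12 G := by
  have := chiL_normal G
  have : ⁅chiL G, chiG1 G⁆.Normal := chiL1_normal G
  have : ⁅chiL G, chiG2 G⁆.Normal := chiL2_normal G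
  have : ⁅chiG1 G, chiG2 G⁆.Normal := chiD_normal G
  have hD : ⁅⁅(chiIota1 G h)⁻¹ * chiIota2 G h, chiIota1 G a⁆, chiIota2 G b⁆ ∈ chiD G :=
    commutatorElement_commutatorElement_mem_commutator (A := chiG1 G) (B := chiG2 G)
      (inv_mem ⟨h, rfl⟩) ⟨a, rfl⟩ ⟨h, rfl⟩ ⟨b, rfl⟩
  exact commutatorElement_commutatorElement_mul_mem_commutator
    (inv_chiIota1_mul_chiIota2_mem_chiL G g) (inv_chiIota1_mul_chiIota2_mem_chiL G h)
    ⟨a, rfl⟩ ⟨b, rfl⟩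
    (mem_centralizer_iff.mp (chiD_le_centralizer_chiL G hD) _
      (inv_chiIota1_mul_chiIota2_mem_chiL G g))
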